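/- Let n ≥ 2 and g ≥ 1. The number of set partitions of {1,…,n} into exactly two blocks whose genus equals g is the binomial coefficient C(n, 2g+2). -/

import Mathlib

/-!
STATEMENT 5: Let n ≥ 2 and g ≥ 1.  The number of set partitions of {1,…,n} into exactly
two blocks whose genus equals g is the binomial coefficient C(n, 2g+2).
-/

open Finset

variable {n : ℕ}

/-- The increasing cycle on a block `b`, as a permutation of `Fin n`. -/
def blockPerm (b : Finset (Fin n)) : Equiv.Perm (Fin n) :=
  (b.sort (· ≤ ·)).formPerm

/-- The permutation `τ` associated to a set partition: the product of the increasing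
cycles on the blocks. -/
def partPerm (P : Finpartition (univ : Finset (Fin n))) : Equiv.Perm (Fin n) :=
  P.parts.noncommProd blockPerm (by
    intro a ha b hb hab
    have hd : Disjoint a b := P.disjoint ha hb hab
    apply Equiv.Perm.Disjoint.commute
    intro x
    by_cases hx : x ∈ a
    · right
      apply List.formPerm_apply_of_notMem
      rw [Finset.mem_sort]
      exact fun hxb => Finset.disjoint_left.mp hd hx hxb
    · left
      apply List.formPerm_apply_of_notMem
      rw [Finset.mem_sort]
      exact hx)

/-- The number of cycles of a permutation, counting fixed points as cycles of length 1. -/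
def cycleCount (π : Equiv.Perm (Fin n)) : ℕ :=
  π.cycleType.card + (univ.filter fun x => π x = x).card

/-- `f(α)`: the number of cycles of `σ ∘ τ⁻¹`, where `σ = (1,2,…,n)`. -/
def partFaces (P : Finpartition (univ : Finset (Fin n))) : ℕ :=
  cycleCount (finRotate n * (partPerm P)⁻¹)

/-- The genus of the set partition `P` equals `g`, i.e. `2g = n + 1 - k - f(α)` where
`k` is the number of blocks. -/
def HasGenus (P : Finpartition (univ : Finset (Fin n))) (g : ℕ) : Prop :=
  n + 1 = P.parts.card + partFaces P + 2 * g

open Fin.NatCast Fin.CommRing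

----------------------------------------------------------------
-- auxiliary development
----------------------------------------------------------------

/-- cyclic successor within a finset -/
def nextIn (s : Finset (Fin n)) (x : Fin n) : Fin n :=
  if h : (s.filter (fun y => x < y)).Nonempty then (s.filter (fun y => x < y)).min' h
  else if h2 : s.Nonempty then s.min' h2 else x

lemma val_add_nat [NeZero n] (x : Fin n) (j : ℕ) : (x + (j : Fin n)).val = (x.val + j) % n := by
  rw [Fin.add_def, Fin.val_natCast]
  conv_rhs => rw [Nat.add_mod]
  rw [Nat.mod_eq_of_lt x.isLt]

lemma cast_succ_sub_one [NeZero n] (x : Fin n) (j : ℕ) :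
    x + ((j + 1 : ℕ) : Fin n) - 1 = x + (j : Fin n) := by
  have : ((j + 1 : ℕ) : Fin n) = (j : Fin n) + 1 := by push_cast; ring
  rw [this, ← add_assoc, add_sub_cancel_right]

lemma blockPerm_apply_not_mem {s : Finset (Fin n)} {x : Fin n} (hx : x ∉ s) :
    blockPerm s x = x := by
  apply List.formPerm_apply_of_notMem
  rwa [Finset.mem_sort]

lemma blockPerm_apply_mem {s : Finset (Fin n)} {x : Fin n} (hx : x ∈ s) :
    blockPerm s x = nextIn s x := by
  have hxl : x ∈ s.sort (· ≤ ·) := (Finset.mem_sort _).mpr hx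
  obtain ⟨i, hi, hix⟩ := List.mem_iff_getElem.mp hxl
  have hnd := Finset.sort_nodup s (· ≤ ·)
  have hform := List.formPerm_apply_getElem _ hnd i hi
  have hmono := (Finset.sortedLT_sort s).strictMono_get
  have hlt_iff : ∀ (a b : ℕ) (ha : a < (s.sort (· ≤ ·)).length)
      (hb : b < (s.sort (· ≤ ·)).length),
      (s.sort (· ≤ ·))[a] < (s.sort (· ≤ ·))[b] ↔ a < b := by
    intro a b ha hb
    have := hmono.lt_iff_lt (a := ⟨a, ha⟩) (b := ⟨b, hb⟩)
    simpa using this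
  have hmem_sort : ∀ (a : ℕ) (ha : a < (s.sort (· ≤ ·)).length), (s.sort (· ≤ ·))[a] ∈ s := by
    intro a ha
    have h1 : (s.sort (· ≤ ·))[a] ∈ s.sort (· ≤ ·) := List.getElem_mem ha
    exact (Finset.mem_sort _).mp h1
  rw [hix] at hform
  unfold blockPerm
  rw [hform]
  rcases eq_or_lt_of_le (Nat.succ_le_of_lt hi) with hlen | hlen
  · -- x is the last element, wrap to min
    have hmod : (i + 1) % (s.sort (· ≤ ·)).length = 0 := by rw [← hlen, Nat.mod_self]
    have hU : s.filter (fun y => x < y) = ∅ := by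
      rw [Finset.filter_eq_empty_iff]
      intro u hu
      obtain ⟨j, hj, hju⟩ := List.mem_iff_getElem.mp ((Finset.mem_sort (α := Fin n) (· ≤ ·)).mpr hu)
      intro hlt
      rw [← hix, ← hju] at hlt
      rw [hlt_iff i j hi hj] at hlt
      omega
    have hne : s.Nonempty := ⟨x, hx⟩
    rw [nextIn, dif_neg (by rw [hU]; simp), dif_pos hne]
    simp only [hmod]
    exact Finset.sorted_zero_eq_min'_aux s (by omega) hne
  · have hmod : (i + 1) % (s.sort (· ≤ ·)).length = i + 1 := Nat.mod_eq_of_lt hlen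
    simp only [hmod]
    have hwU : (s.sort (· ≤ ·))[i + 1] ∈ s.filter (fun y => x < y) := by
      rw [Finset.mem_filter]
      refine ⟨hmem_sort _ hlen, ?_⟩
      rw [← hix, hlt_iff i (i + 1) hi hlen]
      omega
    have hUne : (s.filter (fun y => x < y)).Nonempty := ⟨_, hwU⟩
    rw [nextIn, dif_pos hUne]
    symm
    apply le_antisymm
    · exact Finset.min'_le _ _ hwU
    · apply Finset.le_min'
      intro u hu
      rw [Finset.mem_filter] at hu
      obtain ⟨j, hj, hju⟩ := List.mem_iff_getElem.mp ((Finset.mem_sort (α := Fin n) (· ≤ ·)).mpr hu.1)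
      have hij : i < j := by
        have hlt := hu.2
        rw [← hix, ← hju, hlt_iff i j hi hj] at hlt
        exact hlt
      rw [← hju]
      have := hmono.monotone (a := ⟨i + 1, hlen⟩) (b := ⟨j, hj⟩) (by simp; omega)
      simpa using this

lemma nextIn_mem {s : Finset (Fin n)} {x : Fin n} (hx : x ∈ s) : nextIn s x ∈ s := by
  unfold nextIn
  split_ifs with h h2
  · exact (Finset.mem_filter.mp (Finset.min'_mem _ h)).1
  · exact Finset.min'_mem _ h2
  · exact hx

lemma nextIn_spec [NeZero n] {s : Finset (Fin n)} {x : Fin n} (hx : x ∈ s) :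
    ∃ k : ℕ, 1 ≤ k ∧ k ≤ n ∧ nextIn s x = x + (k : Fin n) ∧
      ∀ j : ℕ, 1 ≤ j → j < k → x + (j : Fin n) ∉ s := by
  by_cases hU : (s.filter (fun y => x < y)).Nonempty
  · set z := (s.filter (fun y => x < y)).min' hU with hz
    have hzU : z ∈ s.filter (fun y => x < y) := Finset.min'_mem _ _
    rw [Finset.mem_filter] at hzU
    have hxz : x.val < z.val := hzU.2
    refine ⟨z.val - x.val, by omega, by have := z.isLt; omega, ?_, ?_⟩
    · rw [nextIn, dif_pos hU, ← hz]
      apply Fin.ext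
      rw [val_add_nat]
      have : x.val + (z.val - x.val) = z.val := by omega
      rw [this, Nat.mod_eq_of_lt z.isLt]
    · intro j hj1 hjk hmem
      have hv : (x + (j : Fin n)).val = x.val + j := by
        rw [val_add_nat]
        exact Nat.mod_eq_of_lt (by have := z.isLt; omega)
      have hin : x + (j : Fin n) ∈ s.filter (fun y => x < y) := by
        rw [Finset.mem_filter]
        exact ⟨hmem, by rw [Fin.lt_def, hv]; omega⟩
      have := Finset.min'_le _ _ hin
      rw [← hz, Fin.le_def, hv] at this
      omega
  · have hne : s.Nonempty := ⟨x, hx⟩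
    set z := s.min' hne with hz
    have hzs : z ∈ s := Finset.min'_mem _ _
    have hzx : z.val ≤ x.val := Finset.min'_le _ _ hx
    clear_value z
    have hxn := x.isLt
    refine ⟨z.val + n - x.val, by omega, by omega, ?_, ?_⟩
    · rw [nextIn, dif_neg hU, dif_pos hne, ← hz]
      apply Fin.ext
      rw [val_add_nat]
      have : x.val + (z.val + n - x.val) = z.val + n := by omega
      rw [this, Nat.add_mod_right, Nat.mod_eq_of_lt z.isLt]
    · intro j hj1 hjk hmem
      by_cases hc : x.val + j < n
      · have hv : (x + (j : Fin n)).val = x.val + j := by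
          rw [val_add_nat]; exact Nat.mod_eq_of_lt hc
        exact hU ⟨x + (j : Fin n), Finset.mem_filter.mpr ⟨hmem, by rw [Fin.lt_def, hv]; omega⟩⟩
      · have hv : (x + (j : Fin n)).val = x.val + j - n := by
          rw [val_add_nat, Nat.mod_eq_sub_mod (by omega), Nat.mod_eq_of_lt (by omega)]
        have := Finset.min'_le _ _ hmem
        rw [← hz, Fin.le_def, hv] at this
        omega

lemma nextIn_eq [NeZero n] {s : Finset (Fin n)} {x z : Fin n} {k : ℕ} (hx : x ∈ s) (hz : z ∈ s)
    (hzk : z = x + (k : Fin n)) (hk1 : 1 ≤ k) (hkn : k ≤ n)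
    (hbet : ∀ j : ℕ, 1 ≤ j → j < k → x + (j : Fin n) ∉ s) : nextIn s x = z := by
  obtain ⟨k', hk1', hkn', heq, hbet'⟩ := nextIn_spec hx
  rcases lt_trichotomy k k' with h | h | h
  · exact absurd hz (by rw [hzk]; exact hbet' k hk1 h)
  · rw [heq, ← h, ← hzk]
  · have hm := nextIn_mem hx
    rw [heq] at hm
    exact absurd hm (hbet k' hk1' h)

/-- the set of positions where the block changes (cyclically) -/
def chgA [NeZero n] (A : Finset (Fin n)) : Finset (Fin n) :=
  univ.filter (fun y => ¬ ((y - 1 ∈ A) ↔ (y ∈ A)))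

lemma A_ne_compl {A : Finset (Fin n)} (h1 : A ≠ ∅) : A ≠ Aᶜ := by
  intro h
  obtain ⟨a, ha⟩ := Finset.nonempty_iff_ne_empty.mpr h1
  have ha' : a ∈ Aᶜ := h ▸ ha
  exact (Finset.mem_compl.mp ha') ha

lemma chgA_compl [NeZero n] (A : Finset (Fin n)) : chgA Aᶜ = chgA A := by
  unfold chgA
  ext y
  simp only [Finset.mem_filter, Finset.mem_univ, true_and, Finset.mem_compl]
  tauto

/-- the two-block partition with blocks A and Aᶜ -/
def twoBlockPart (A : Finset (Fin n)) (h1 : A ≠ ∅) (h2 : Aᶜ ≠ ∅) :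
    Finpartition (univ : Finset (Fin n)) where
  parts := {A, Aᶜ}
  supIndep := by
    rw [Finset.supIndep_pair (A_ne_compl h1)]
    exact disjoint_compl_right
  sup_parts := by
    rw [Finset.sup_insert, Finset.sup_singleton, Finset.sup_eq_union]
    simp only [id_eq]
    exact Finset.union_compl A
  bot_notMem := by
    intro h
    rcases Finset.mem_insert.mp h with h | h
    · exact h1 h.symm
    · exact h2 ((Finset.mem_singleton.mp h).symm)

lemma twoBlockPart_parts_card {A : Finset (Fin n)} (h1 : A ≠ ∅) (h2 : Aᶜ ≠ ∅) :
    (twoBlockPart A h1 h2).parts.card = 2 :=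
  Finset.card_pair (A_ne_compl h1)

lemma parts_pair [NeZero n] {P : Finpartition (univ : Finset (Fin n))} (h : P.parts.card = 2) :
    ∃ (A : Finset (Fin n)) (h1 : A ≠ ∅) (h2 : Aᶜ ≠ ∅), 0 ∈ A ∧ P = twoBlockPart A h1 h2 := by
  obtain ⟨a, b, hab, hP⟩ := Finset.card_eq_two.mp h
  have hsup := P.sup_parts
  rw [hP, Finset.sup_insert, Finset.sup_singleton, Finset.sup_eq_union] at hsup
  simp only [id_eq] at hsup
  have hdisj : Disjoint a b :=
    P.disjoint (by rw [hP]; simp) (by rw [hP]; simp) hab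
  have ha : a ≠ ∅ := by
    intro hbot
    exact P.bot_notMem (by rw [hP, Finset.bot_eq_empty, ← hbot]; simp)
  have hbne : b ≠ ∅ := by
    intro hbot
    exact P.bot_notMem (by rw [hP, Finset.bot_eq_empty, ← hbot]; simp)
  have hb : b = aᶜ := by
    ext x
    rw [Finset.mem_compl]
    constructor
    · intro hx hxa
      exact Finset.disjoint_left.mp hdisj hxa hx
    · intro hxa
      have hx : x ∈ a ∪ b := by rw [hsup]; exact Finset.mem_univ x
      rcases Finset.mem_union.mp hx with h' | h'
      · exact absurd h' hxa
      · exact h'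
  subst hb
  by_cases h0 : 0 ∈ a
  · refine ⟨a, ha, hbne, h0, ?_⟩
    apply Finpartition.ext
    rw [hP]
    rfl
  · have h0' : 0 ∈ aᶜ := Finset.mem_compl.mpr h0
    refine ⟨aᶜ, hbne, by rwa [compl_compl], h0', ?_⟩
    apply Finpartition.ext
    rw [hP]
    show ({a, aᶜ} : Finset (Finset (Fin n))) = {aᶜ, aᶜᶜ}
    rw [compl_compl, Finset.pair_comm]

lemma partPerm_twoBlock_apply {A : Finset (Fin n)} (h1 : A ≠ ∅) (h2 : Aᶜ ≠ ∅) (x : Fin n) :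
    partPerm (twoBlockPart A h1 h2) x = if x ∈ A then nextIn A x else nextIn Aᶜ x := by
  have hnm : A ∉ ({Aᶜ} : Finset (Finset (Fin n))) := by
    simp only [Finset.mem_singleton]
    exact A_ne_compl h1
  have hmul : partPerm (twoBlockPart A h1 h2) = blockPerm A * blockPerm Aᶜ := by
    unfold partPerm
    show Finset.noncommProd {A, Aᶜ} blockPerm _ = _
    refine (Finset.noncommProd_insert_of_notMem _ _ _ _ hnm).trans ?_
    rw [Finset.noncommProd_singleton]
  rw [hmul, Equiv.Perm.mul_apply]
  by_cases hx : x ∈ A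
  · rw [if_pos hx, blockPerm_apply_not_mem (s := Aᶜ) (by simp [Finset.mem_compl, hx]),
      blockPerm_apply_mem hx]
  · have hx' : x ∈ Aᶜ := Finset.mem_compl.mpr hx
    rw [if_neg hx, blockPerm_apply_mem hx']
    exact blockPerm_apply_not_mem (s := A) (by
      have := nextIn_mem hx'
      simp only [Finset.mem_compl] at this
      exact this)

/-- chain lemma: no changes along a stretch means same block -/
lemma chain {m : ℕ} {A : Finset (Fin (m + 1))} {y : Fin (m + 1)} {k : ℕ}
    (hb : ∀ j : ℕ, 1 ≤ j → j < k → y + (j : Fin (m + 1)) ∉ chgA A) :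
    ∀ j : ℕ, j < k → (y + (j : Fin (m + 1)) ∈ A ↔ y ∈ A) := by
  intro j
  induction j with
  | zero => intro _; norm_num
  | succ j ih =>
    intro hj
    have hnot := hb (j + 1) (by omega) hj
    simp only [chgA, Finset.mem_filter, Finset.mem_univ, true_and, not_not] at hnot
    rw [cast_succ_sub_one] at hnot
    exact hnot.symm.trans (ih (by omega))

/-- the main step: next change point = next element in the other block -/
lemma step {m : ℕ} {A : Finset (Fin (m + 1))} {y : Fin (m + 1)}
    (hy : y ∈ chgA A) (hyA : y ∈ A) :
    nextIn Aᶜ (y - 1) = nextIn (chgA A) y := by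
  have hiff : ¬ (y - 1 ∈ A ↔ y ∈ A) := by
    simpa [chgA] using hy
  have hy1 : y - 1 ∈ Aᶜ := Finset.mem_compl.mpr (fun h => hiff ⟨fun _ => hyA, fun _ => h⟩)
  obtain ⟨k, hk1, hkn, heq, hbet⟩ := nextIn_spec hy
  have hz : nextIn (chgA A) y ∈ chgA A := nextIn_mem hy
  have hchain := chain hbet
  have hklt : k < m + 1 := by
    rcases eq_or_lt_of_le hkn with hk | hk
    · exfalso
      have hm1 : ((m : ℕ) : Fin (m + 1)) = -1 := by
        have : ((m : ℕ) : Fin (m + 1)) + 1 = 0 := by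
          push_cast
          rw [← Nat.cast_one (R := Fin (m + 1)), ← Nat.cast_add, Fin.natCast_self]
        linear_combination this
      have := hchain m (by omega)
      rw [hm1] at this
      have h2 : y + (-1) = y - 1 := by ring
      rw [h2] at this
      exact hiff this
    · omega
  have hz1 : nextIn (chgA A) y - 1 = y + ((k - 1 : ℕ) : Fin (m + 1)) := by
    rw [heq]
    have : k = (k - 1) + 1 := by omega
    rw [this, cast_succ_sub_one]
    norm_num
  have hzA : nextIn (chgA A) y ∈ Aᶜ := by
    have hzc : ¬ (nextIn (chgA A) y - 1 ∈ A ↔ nextIn (chgA A) y ∈ A) := by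
      simpa [chgA] using hz
    have hz1A : nextIn (chgA A) y - 1 ∈ A := by
      rw [hz1]
      exact (hchain (k - 1) (by omega)).mpr hyA
    exact Finset.mem_compl.mpr (fun h => hzc ⟨fun _ => h, fun _ => hz1A⟩)
  apply nextIn_eq (k := k + 1) hy1 hzA
  · rw [heq]
    push_cast
    ring
  · omega
  · omega
  · intro j hj1 hjk
    have hrw : (y - 1) + ((j : ℕ) : Fin (m + 1)) = y + ((j - 1 : ℕ) : Fin (m + 1)) := by
      have hj' : j = (j - 1) + 1 := by omega
      rw [hj']
      push_cast
      ring
    rw [hrw]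
    simp only [Finset.mem_compl, not_not]
    exact (hchain (j - 1) (by omega)).mpr hyA

/-- the key identity : τ = ρ ∘ σ -/
lemma key {m : ℕ} {A : Finset (Fin (m + 1))} (h1 : A ≠ ∅) (h2 : Aᶜ ≠ ∅) :
    partPerm (twoBlockPart A h1 h2) = blockPerm (chgA A) * finRotate (m + 1) := by
  apply Equiv.ext
  intro x
  rw [Equiv.Perm.mul_apply, finRotate_succ_apply, partPerm_twoBlock_apply]
  set y := x + 1 with hy
  have hx : x = y - 1 := by rw [hy]; ring
  by_cases hyT : y ∈ chgA A
  · have hiff : ¬ (y - 1 ∈ A ↔ y ∈ A) := by simpa [chgA] using hyT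
    rw [blockPerm_apply_mem hyT]
    by_cases hyA : y ∈ A
    · have hxA : x ∉ A := by
        rw [hx]
        exact fun h => hiff ⟨fun _ => hyA, fun _ => h⟩
      rw [if_neg hxA, hx]
      exact step hyT hyA
    · have hyA' : y ∈ Aᶜ := Finset.mem_compl.mpr hyA
      have hyT' : y ∈ chgA Aᶜ := by rwa [chgA_compl]
      have hxA : x ∈ A := by
        rw [hx]
        by_contra hc
        exact hiff ⟨fun h => absurd h hc, fun h => absurd h hyA⟩
      rw [if_pos hxA, hx]
      have hstep := step hyT' hyA'
      rwa [compl_compl, chgA_compl] at hstep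
  · have hiff : (y - 1 ∈ A ↔ y ∈ A) := by
      simpa [chgA] using hyT
    rw [blockPerm_apply_not_mem hyT]
    by_cases hyA : y ∈ A
    · have hxA : x ∈ A := hx ▸ hiff.mpr hyA
      rw [if_pos hxA]
      apply nextIn_eq (k := 1) hxA hyA
      · rw [hy]; push_cast; ring
      · omega
      · omega
      · intro j hj1 hjk; omega
    · have hyA' : y ∈ Aᶜ := Finset.mem_compl.mpr hyA
      have hxA : x ∉ A := fun h => hyA (hiff.mp (hx ▸ h))
      rw [if_neg hxA]
      apply nextIn_eq (k := 1) (Finset.mem_compl.mpr hxA) hyA'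
      · rw [hy]; push_cast; ring
      · omega
      · omega
      · intro j hj1 hjk; omega

lemma cycleCount_blockPerm_inv_small {m : ℕ} {T : Finset (Fin (m + 1))} (hT : T.card ≤ 1) :
    cycleCount (blockPerm T)⁻¹ = m + 1 := by
  have hl : (T.sort (· ≤ ·)).length ≤ 1 := by
    rw [Finset.length_sort]; exact hT
  have hone : blockPerm T = 1 := by
    unfold blockPerm
    rcases hls : T.sort (· ≤ ·) with _ | ⟨a, _ | ⟨b, t⟩⟩
    · exact List.formPerm_nil
    · exact List.formPerm_singleton a
    · rw [hls] at hl; simp at hl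
  rw [hone, inv_one]
  unfold cycleCount
  rw [Equiv.Perm.cycleType_one]
  simp

lemma cycleCount_blockPerm_inv {m : ℕ} {T : Finset (Fin (m + 1))} (hT : 2 ≤ T.card) :
    cycleCount (blockPerm T)⁻¹ = 1 + (m + 1 - T.card) := by
  have hlen : (T.sort (· ≤ ·)).length = T.card := Finset.length_sort _
  have hnd := Finset.sort_nodup T (· ≤ ·)
  have hcyc : (blockPerm T).IsCycle :=
    List.isCycle_formPerm hnd (by rw [hlen]; exact hT)
  have hinv : ((blockPerm T)⁻¹).IsCycle := hcyc.inv
  have hsupp : (blockPerm T).support = T := by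
    unfold blockPerm
    rw [List.support_formPerm_of_nodup _ hnd (by
      intro x hx
      rw [hx] at hlen
      simp at hlen
      omega)]
    exact Finset.sort_toFinset _ _
  unfold cycleCount
  rw [hinv.cycleType]
  have hfix : (univ.filter fun x => (blockPerm T)⁻¹ x = x) = ((blockPerm T)⁻¹.support)ᶜ := by
    ext x
    simp only [Finset.mem_filter, Finset.mem_univ, true_and, Finset.mem_compl,
      Equiv.Perm.mem_support, not_not, Equiv.Perm.inv_eq_iff_eq]
  rw [hfix, Finset.card_compl, Equiv.Perm.support_inv, hsupp]
  simp

lemma partFaces_twoBlock {m : ℕ} {A : Finset (Fin (m + 1))} (h1 : A ≠ ∅) (h2 : Aᶜ ≠ ∅) :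
    partFaces (twoBlockPart A h1 h2) = cycleCount (blockPerm (chgA A))⁻¹ := by
  unfold partFaces
  rw [key h1 h2]
  congr 1
  group

lemma genus_iff {m g : ℕ} {A : Finset (Fin (m + 1))} (h1 : A ≠ ∅) (h2 : Aᶜ ≠ ∅) (hg : 1 ≤ g) :
    HasGenus (twoBlockPart A h1 h2) g ↔ (chgA A).card = 2 * g + 2 := by
  have hle : (chgA A).card ≤ m + 1 := by
    have := Finset.card_le_univ (chgA A)
    simpa using this
  unfold HasGenus
  rw [twoBlockPart_parts_card, partFaces_twoBlock h1 h2]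
  rcases le_or_gt (chgA A).card 1 with hc | hc
  · rw [cycleCount_blockPerm_inv_small hc]
    omega
  · rw [cycleCount_blockPerm_inv hc]
    omega

/-- intrinsic change set of a partition -/
def chg [NeZero n] (P : Finpartition (univ : Finset (Fin n))) : Finset (Fin n) :=
  univ.filter (fun y => ¬ ∃ b ∈ P.parts, y - 1 ∈ b ∧ y ∈ b)

lemma chg_twoBlock {m : ℕ} {A : Finset (Fin (m + 1))} (h1 : A ≠ ∅) (h2 : Aᶜ ≠ ∅) :
    chg (twoBlockPart A h1 h2) = chgA A := by
  unfold chg chgA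
  ext y
  simp only [Finset.mem_filter, Finset.mem_univ, true_and]
  have : (twoBlockPart A h1 h2).parts = {A, Aᶜ} := rfl
  rw [this]
  simp only [Finset.mem_insert, Finset.mem_singleton, Finset.mem_compl]
  constructor
  · intro h
    intro hiff
    apply h
    by_cases hA : y ∈ A
    · exact ⟨A, Or.inl rfl, hiff.mpr hA, hA⟩
    · exact ⟨Aᶜ, Or.inr rfl, Finset.mem_compl.mpr (fun hc => hA (hiff.mp hc)),
        Finset.mem_compl.mpr hA⟩
  · rintro h ⟨b, hb | hb, hyb1, hyb⟩ <;> subst hb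
    · exact h ⟨fun _ => hyb, fun _ => hyb1⟩
    · rw [Finset.mem_compl] at hyb1 hyb
      exact h ⟨fun hc => absurd hc hyb1, fun hc => absurd hc hyb⟩

/-- parity lemma: membership in A is determined by parity of changes -/
lemma parity {m : ℕ} (A : Finset (Fin (m + 1))) (x : Fin (m + 1)) :
    ((x ∈ A) ↔ (0 ∈ A)) ↔ Even ((chgA A).filter (fun t => t ≠ 0 ∧ t ≤ x)).card := by
  induction x using Fin.induction with
  | zero =>
    have hfil : (chgA A).filter (fun t => t ≠ 0 ∧ t ≤ (0 : Fin (m + 1))) = ∅ := by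
      apply Finset.filter_false_of_mem
      intro t _ ⟨ht0, ht⟩
      exact ht0 (Fin.le_zero_iff.mp ht)
    rw [hfil]
    simp
  | succ i ih =>
    have hne : (i.succ : Fin (m + 1)) ≠ 0 := Fin.succ_ne_zero i
    have hsub : (i.succ : Fin (m + 1)) - 1 = i.castSucc := by
      apply Fin.ext
      rw [Fin.coe_sub_one, if_neg hne]
      simp
    have hsplit : (chgA A).filter (fun t => t ≠ 0 ∧ t ≤ i.succ) =
        ((chgA A).filter (fun t => t ≠ 0 ∧ t ≤ i.castSucc)) ∪
          ((chgA A).filter (fun t => t = i.succ)) := by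
      ext t
      simp only [Finset.mem_filter, Finset.mem_union]
      constructor
      · rintro ⟨hmem, ht0, htle⟩
        rcases eq_or_lt_of_le htle with heq | hlt
        · exact Or.inr ⟨hmem, heq⟩
        · refine Or.inl ⟨hmem, ht0, ?_⟩
          rw [Fin.le_def, Fin.coe_castSucc]
          rw [Fin.lt_def, Fin.val_succ] at hlt
          omega
      · rintro (⟨hmem, ht0, htle⟩ | ⟨hmem, hteq⟩)
        · refine ⟨hmem, ht0, ?_⟩
          rw [Fin.le_def, Fin.val_succ]
          rw [Fin.le_def, Fin.coe_castSucc] at htle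
          omega
        · exact ⟨hmem, hteq ▸ hne, hteq ▸ le_rfl⟩
    have hdisj : Disjoint ((chgA A).filter (fun t => t ≠ 0 ∧ t ≤ i.castSucc))
        ((chgA A).filter (fun t => t = i.succ)) := by
      rw [Finset.disjoint_left]
      intro t ht1 ht2
      rw [Finset.mem_filter] at ht1 ht2
      have h1 := ht1.2.2
      rw [ht2.2, Fin.le_def, Fin.val_succ, Fin.coe_castSucc] at h1
      omega
    rw [hsplit, Finset.card_union_of_disjoint hdisj, Finset.filter_eq']
    by_cases hT : i.succ ∈ chgA A
    · have hiff : ¬ (i.castSucc ∈ A ↔ i.succ ∈ A) := by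
        have := hT
        simp only [chgA, Finset.mem_filter, Finset.mem_univ, true_and] at this
        rwa [hsub] at this
      rw [if_pos hT, Finset.card_singleton, Nat.even_add_one]
      tauto
    · have hiff : (i.castSucc ∈ A ↔ i.succ ∈ A) := by
        have := hT
        simp only [chgA, Finset.mem_filter, Finset.mem_univ, true_and, not_not] at this
        rwa [hsub] at this
      rw [if_neg hT, Finset.card_empty]
      simp only [Nat.add_zero]
      tauto

lemma recon {m : ℕ} {A B : Finset (Fin (m + 1))} (hA : 0 ∈ A) (hB : 0 ∈ B)
    (h : chgA A = chgA B) : A = B := by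
  ext x
  have pA := parity A x
  have pB := parity B x
  rw [h] at pA
  tauto

/-- surjectivity: every even-size set is a change set -/
lemma surj {m : ℕ} {T : Finset (Fin (m + 1))} (he : Even T.card) (hne : T.Nonempty) :
    ∃ (A : Finset (Fin (m + 1))) (h1 : A ≠ ∅) (h2 : Aᶜ ≠ ∅), chgA A = T := by
  set A := univ.filter (fun x : Fin (m + 1) => Odd ((T.filter (fun t => t ≤ x)).card)) with hA
  have hmemA : ∀ x : Fin (m + 1), x ∈ A ↔ Odd ((T.filter (fun t => t ≤ x)).card) := by
    intro x
    rw [hA]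
    simp
  have hchg : chgA A = T := by
    ext y
    rw [show (y ∈ chgA A) = ¬ ((y - 1 ∈ A) ↔ (y ∈ A)) by
      simp [chgA]]
    rw [hmemA, hmemA]
    by_cases hy0 : y = 0
    · subst hy0
      have hfull : T.filter (fun t => t ≤ (0 : Fin (m + 1)) - 1) = T := by
        apply Finset.filter_true_of_mem
        intro t _
        rw [Fin.le_def, Fin.coe_sub_one, if_pos rfl]
        have := t.isLt
        omega
      have hzero : T.filter (fun t => t ≤ (0 : Fin (m + 1))) = T.filter (fun t => t = 0) := by
        apply Finset.filter_congr
        intro t _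
        constructor
        · exact fun h => Fin.le_zero_iff.mp h
        · exact fun h => h ▸ le_rfl
      rw [hfull, hzero, Finset.filter_eq']
      have hnotodd : ¬ Odd T.card := by
        rw [← Nat.not_even_iff_odd]
        exact not_not.mpr he
      by_cases h0T : 0 ∈ T
      · rw [if_pos h0T]
        simp [h0T, hnotodd]
      · rw [if_neg h0T]
        simp [h0T, hnotodd]
    · have hyval : 1 ≤ y.val := by
        rcases Nat.eq_zero_or_pos y.val with h | h
        · exact absurd (Fin.ext h) hy0
        · exact h
      have hsplit : T.filter (fun t => t ≤ y) =
          (T.filter (fun t => t ≤ y - 1)) ∪ (T.filter (fun t => t = y)) := by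
        ext t
        simp only [Finset.mem_filter, Finset.mem_union]
        have hy1 : (y - 1).val = y.val - 1 := by
          rw [Fin.coe_sub_one, if_neg hy0]
        constructor
        · rintro ⟨hmem, htle⟩
          rcases eq_or_lt_of_le htle with heq | hlt
          · exact Or.inr ⟨hmem, heq⟩
          · refine Or.inl ⟨hmem, ?_⟩
            rw [Fin.le_def, hy1]
            rw [Fin.lt_def] at hlt
            omega
        · rintro (⟨hmem, htle⟩ | ⟨hmem, hteq⟩)
          · refine ⟨hmem, ?_⟩
            rw [Fin.le_def, hy1] at htle
            rw [Fin.le_def]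
            omega
          · exact ⟨hmem, hteq ▸ le_rfl⟩
      have hdisj : Disjoint (T.filter (fun t => t ≤ y - 1)) (T.filter (fun t => t = y)) := by
        rw [Finset.disjoint_left]
        intro t ht1 ht2
        rw [Finset.mem_filter] at ht1 ht2
        have h1 := ht1.2
        have hy1 : (y - 1).val = y.val - 1 := by
          rw [Fin.coe_sub_one, if_neg hy0]
        rw [ht2.2, Fin.le_def, hy1] at h1
        omega
      rw [hsplit, Finset.card_union_of_disjoint hdisj, Finset.filter_eq']
      by_cases hyT : y ∈ T
      · rw [if_pos hyT, Finset.card_singleton]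
        simp only [Nat.odd_add_one, hyT, iff_true]
        tauto
      · rw [if_neg hyT, Finset.card_empty]
        simp [hyT]
  obtain ⟨t, ht⟩ := hne
  rw [← hchg] at ht
  have hiff : ¬ ((t - 1 ∈ A) ↔ (t ∈ A)) := by
    simpa [chgA] using ht
  refine ⟨A, ?_, ?_, hchg⟩
  · intro hemp
    rw [Finset.eq_empty_iff_forall_notMem] at hemp
    exact hiff ⟨fun h => absurd h (hemp _), fun h => absurd h (hemp _)⟩
  · intro hemp
    have : ∀ x : Fin (m + 1), x ∈ A := by
      intro x
      by_contra hc
      have : x ∈ Aᶜ := Finset.mem_compl.mpr hc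
      rw [hemp] at this
      exact absurd this (Finset.notMem_empty x)
    exact hiff ⟨fun _ => this t, fun _ => this (t - 1)⟩

theorem count_two_block_partitions_genus_g (n g : ℕ) (hn : 2 ≤ n) (hg : 1 ≤ g) :
    Nat.card {P : Finpartition (univ : Finset (Fin n)) //
        P.parts.card = 2 ∧ HasGenus P g} =
      n.choose (2 * g + 2) := by
  obtain ⟨m, rfl⟩ : ∃ m, n = m + 1 := ⟨n - 1, by omega⟩
  have hF : ∀ P : {P : Finpartition (univ : Finset (Fin (m + 1))) //
      P.parts.card = 2 ∧ HasGenus P g}, (chg P.1).card = 2 * g + 2 := by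
    rintro ⟨P, hP2, hPg⟩
    obtain ⟨A, h1, h2, h0, hPeq⟩ := parts_pair hP2
    subst hPeq
    rw [chg_twoBlock]
    exact (genus_iff h1 h2 hg).mp hPg
  set F : {P : Finpartition (univ : Finset (Fin (m + 1))) //
      P.parts.card = 2 ∧ HasGenus P g} →
      {T : Finset (Fin (m + 1)) // T.card = 2 * g + 2} :=
    fun P => ⟨chg P.1, hF P⟩ with hFdef
  have hbij : Function.Bijective F := by
    constructor
    · rintro ⟨P, hP2, hPg⟩ ⟨Q, hQ2, hQg⟩ h
      obtain ⟨A, hA1, hA2, hA0, hPeq⟩ := parts_pair hP2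
      obtain ⟨B, hB1, hB2, hB0, hQeq⟩ := parts_pair hQ2
      have hchg : chg P = chg Q := congrArg Subtype.val h
      rw [hPeq, hQeq, chg_twoBlock, chg_twoBlock] at hchg
      have hAB : A = B := recon hA0 hB0 hchg
      subst hAB
      apply Subtype.ext
      show P = Q
      rw [hPeq, hQeq]
    · rintro ⟨T, hT⟩
      have heven : Even T.card := by
        rw [hT]
        exact ⟨g + 1, by ring⟩
      have hTne : T.Nonempty := by
        rw [← Finset.card_pos, hT]
        omega
      obtain ⟨A, h1, h2, hchg⟩ := surj heven hTne
      refine ⟨⟨twoBlockPart A h1 h2, twoBlockPart_parts_card h1 h2, ?_⟩, ?_⟩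
      · exact (genus_iff h1 h2 hg).mpr (by rw [hchg]; exact hT)
      · apply Subtype.ext
        show chg (twoBlockPart A h1 h2) = T
        rw [chg_twoBlock, hchg]
  rw [Nat.card_eq_of_bijective F hbij, Nat.card_eq_fintype_card, Fintype.card_subtype]
  have hps : univ.filter (fun T : Finset (Fin (m + 1)) => T.card = 2 * g + 2) =
      Finset.powersetCard (2 * g + 2) univ := by
    ext T
    simp [Finset.mem_powersetCard, Finset.subset_univ]
  rw [hps, Finset.card_powersetCard, Finset.card_univ, Fintype.card_fin]
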